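/- Let Φ: ℝⁿ ⇒ ℝᵐ have closed graph and let x̄ ∈ M := {x | 0 ∈ Φ(x)}. If Φ is metrically regular at (x̄,0), then x̄ is AM-regular. -/

import Mathlib

open Filter Topology RealInnerProductSpace
open scoped ENNReal NNReal

noncomputable section

/-- Fréchet (regular) normal cone to `A` at `x`. -/
def frechetNC {E : Type*} [NormedAddCommGroup E] [InnerProductSpace ℝ E]
    (A : Set E) (x : E) : Set E :=
  {v | x ∈ A ∧ ∀ ε > 0, ∃ δ > 0, ∀ y ∈ A, ‖y - x‖ < δ → ⟪v, y - x⟫ ≤ ε * ‖y - x‖}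

/-- Limiting (Mordukhovich) normal cone to `A` at `x`. -/
def limitingNC {E : Type*} [NormedAddCommGroup E] [InnerProductSpace ℝ E]
    (A : Set E) (x : E) : Set E :=
  {v | ∃ xk vk : ℕ → E, (∀ k, xk k ∈ A) ∧ Tendsto xk atTop (𝓝 x) ∧
    (∀ k, vk k ∈ frechetNC A (xk k)) ∧ Tendsto vk atTop (𝓝 v)}

section SV
variable {E F : Type*} [NormedAddCommGroup E] [InnerProductSpace ℝ E]
  [NormedAddCommGroup F] [InnerProductSpace ℝ F]

/-- Pack a pair into the `ℓ²` product space. -/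
def pl2 (x : E) (y : F) : WithLp 2 (E × F) := (WithLp.equiv 2 (E × F)).symm (x, y)

/-- Graph of a set-valued map, as a subset of the `ℓ²` product space. -/
def svGraph (Φ : E → Set F) : Set (WithLp 2 (E × F)) :=
  {p | (WithLp.equiv 2 (E × F) p).2 ∈ Φ (WithLp.equiv 2 (E × F) p).1}

/-- Limiting coderivative `D*Φ(x,y)(ys)`. -/
def coderiv (Φ : E → Set F) (x : E) (y : F) (ys : F) : Set E :=
  {xs | pl2 xs (-ys) ∈ limitingNC (svGraph Φ) (pl2 x y)}

/-- Limiting subdifferential of a real-valued function. -/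
def limSubdiff (f : E → ℝ) (x : E) : Set E :=
  {v | pl2 v (-1 : ℝ) ∈ limitingNC
    {p : WithLp 2 (E × ℝ) | f (WithLp.equiv 2 (E × ℝ) p).1 ≤ (WithLp.equiv 2 (E × ℝ) p).2}
    (pl2 x (f x))}

/-- The multiplier-union map `𝓜(x,y) = ⋃_λ D*Φ(x,y)(λ)`. -/
def Mmap (Φ : E → Set F) (x : E) (y : F) : Set E := ⋃ l : F, coderiv Φ x y l

/-- Outer limit `Limsup_{x→x̄,y→0} 𝓜(x,y)`. -/
def MmapLimsup (Φ : E → Set F) (xb : E) : Set E :=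
  {xs | ∃ (xk xsk : ℕ → E) (yk : ℕ → F), Tendsto xk atTop (𝓝 xb) ∧
    Tendsto yk atTop (𝓝 0) ∧ Tendsto xsk atTop (𝓝 xs) ∧
    ∀ k, xsk k ∈ Mmap Φ (xk k) (yk k)}

/-- AM-regularity. -/
def AMregular (Φ : E → Set F) (xb : E) : Prop := MmapLimsup Φ xb ⊆ Mmap Φ xb 0
end SV

section NormOnly
variable {E F : Type*} [NormedAddCommGroup E] [NormedAddCommGroup F]

/-- Generalized distance function `ρ_Γ`, with value `+∞` when `Γ x = ∅`. -/
def rhoD (Γ : E → Set F) (x : E) (y : F) : ℝ≥0∞ := ⨅ z ∈ Γ x, (‖y - z‖₊ : ℝ≥0∞)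

/-- Set of projections `Π(y, Γ x)`. -/
def projSet (Γ : E → Set F) (x : E) (y : F) : Set F :=
  {z | z ∈ Γ x ∧ (‖y - z‖₊ : ℝ≥0∞) = rhoD Γ x y}

/-- Aubin property of `Φ` at `(xb, yb) ∈ gph Φ`. -/
def AubinAt (Φ : E → Set F) (xb : E) (yb : F) : Prop :=
  ∃ U ∈ 𝓝 xb, ∃ V ∈ 𝓝 yb, ∃ κ : ℝ, 0 < κ ∧
    ∀ x ∈ U, ∀ x' ∈ U, ∀ z ∈ Φ x ∩ V, ∃ w ∈ Φ x', ‖z - w‖ ≤ κ * ‖x - x'‖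
end NormOnly


/-- Metric regularity of `Φ` at `(xb, yb) ∈ gph Φ` (distance to `∅` is `+∞`). -/
def MetricallyRegularAt {E F : Type*} [NormedAddCommGroup E] [NormedAddCommGroup F]
    (Φ : E → Set F) (xb : E) (yb : F) : Prop :=
  ∃ U ∈ 𝓝 xb, ∃ V ∈ 𝓝 yb, ∃ κ : ℝ, 0 < κ ∧ ∀ x ∈ U, ∀ y ∈ V,
    EMetric.infEdist x {x' | y ∈ Φ x'} ≤ ENNReal.ofReal κ * EMetric.infEdist y (Φ x)


set_option linter.unusedSectionVars false

section Helpers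
variable {E F : Type*} [NormedAddCommGroup E] [InnerProductSpace ℝ E]
  [NormedAddCommGroup F] [InnerProductSpace ℝ F]

lemma pl2_sub (a c : E) (b d : F) : pl2 a b - pl2 c d = pl2 (a-c) (b-d) := rfl
lemma pl2_eta (q : WithLp 2 (E × F)) : pl2 q.ofLp.1 q.ofLp.2 = q := rfl
lemma inner_pl2 (a c : E) (b d : F) : ⟪pl2 a b, pl2 c d⟫ = ⟪a,c⟫ + ⟪b,d⟫ := rfl

lemma norm_pl2_le (a : E) (b : F) : ‖pl2 a b‖ ≤ ‖a‖ + ‖b‖ := by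
  have h : pl2 a b = pl2 a (0:F) + pl2 (0:E) b := by
    show pl2 a b = pl2 (a + 0) (0 + b); rw [add_zero, zero_add]
  rw [h]
  refine (norm_add_le _ _).trans (le_of_eq ?_)
  rw [show pl2 a (0:F) = WithLp.toLp 2 (a,0) from rfl,
    show pl2 (0:E) b = WithLp.toLp 2 (0,b) from rfl,
    WithLp.norm_toLp_fst, WithLp.norm_toLp_snd]

lemma tendsto_pl2 {x : ℕ → E} {y : ℕ → F} {a : E} {b : F}
    (hx : Tendsto x atTop (𝓝 a)) (hy : Tendsto y atTop (𝓝 b)) :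
    Tendsto (fun k => pl2 (x k) (y k)) atTop (𝓝 (pl2 a b)) :=
  ((WithLp.prodContinuousLinearEquiv 2 ℝ E F).symm.continuous.tendsto (a, b)).comp
    (hx.prodMk_nhds hy)

lemma tendsto_pl2_fst {q : ℕ → WithLp 2 (E × F)} {p : WithLp 2 (E × F)}
    (h : Tendsto q atTop (𝓝 p)) : Tendsto (fun k => (q k).ofLp.1) atTop (𝓝 p.ofLp.1) :=
  (Continuous.tendsto (continuous_fst.comp
    (WithLp.prod_continuous_ofLp 2 E F)) p).comp h

lemma tendsto_pl2_snd {q : ℕ → WithLp 2 (E × F)} {p : WithLp 2 (E × F)}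
    (h : Tendsto q atTop (𝓝 p)) : Tendsto (fun k => (q k).ofLp.2) atTop (𝓝 p.ofLp.2) :=
  (Continuous.tendsto (continuous_snd.comp
    (WithLp.prod_continuous_ofLp 2 E F)) p).comp h
end Helpers

section L1
variable {E : Type*} [NormedAddCommGroup E] [InnerProductSpace ℝ E]

lemma tendsto_of_dist_lt {p q : ℕ → E} {pb : E} (hp : Tendsto p atTop (𝓝 pb))
    (h : ∀ k, dist (q k) (p k) < 1/((k:ℝ)+1)) : Tendsto q atTop (𝓝 pb) := by
  rw [tendsto_iff_dist_tendsto_zero] at hp ⊢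
  refine squeeze_zero (fun k => dist_nonneg)
    (fun k => (dist_triangle (q k) (p k) pb).trans (add_le_add (h k).le le_rfl)) ?_
  simpa using tendsto_one_div_add_atTop_nhds_zero_nat.add hp

lemma limitingNC_closed {A : Set E} {p v : ℕ → E} {pb vb : E}
    (hp : Tendsto p atTop (𝓝 pb)) (hv : Tendsto v atTop (𝓝 vb))
    (h : ∀ k, v k ∈ limitingNC A (p k)) : vb ∈ limitingNC A pb := by
  have key : ∀ k : ℕ, ∃ q w : E, q ∈ A ∧ w ∈ frechetNC A q ∧
      dist q (p k) < 1/((k:ℝ)+1) ∧ dist w (v k) < 1/((k:ℝ)+1) := by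
    intro k
    obtain ⟨xk, vk, hxA, hxk, hvF, hvk⟩ := h k
    have hpos : (0:ℝ) < 1/((k:ℝ)+1) := by positivity
    have h1 : ∀ᶠ j in atTop, dist (xk j) (p k) < 1/((k:ℝ)+1) :=
      (tendsto_iff_dist_tendsto_zero.mp hxk).eventually_lt_const hpos
    have h2 : ∀ᶠ j in atTop, dist (vk j) (v k) < 1/((k:ℝ)+1) :=
      (tendsto_iff_dist_tendsto_zero.mp hvk).eventually_lt_const hpos
    obtain ⟨j, hj1, hj2⟩ := (h1.and h2).exists
    exact ⟨xk j, vk j, hxA j, hvF j, hj1, hj2⟩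
  choose q w hqA hwF hq hw using key
  exact ⟨q, w, hqA, tendsto_of_dist_lt hp hq, hwF, tendsto_of_dist_lt hv hw⟩
end L1

section L2
variable {E F : Type*} [NormedAddCommGroup E] [InnerProductSpace ℝ E]
  [NormedAddCommGroup F] [InnerProductSpace ℝ F]

lemma frechet_bound {Φ : E → Set F} {U : Set E} {r κ : ℝ}
    (hκ : 0 < κ) (hr : 0 < r)
    (hreg : ∀ x ∈ U, ∀ y ∈ Metric.ball (0:F) r,
      EMetric.infEdist x {x' | y ∈ Φ x'} ≤ ENNReal.ofReal κ * EMetric.infEdist y (Φ x))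
    {x : E} {y : F} (hxU : x ∈ U) (hy : ‖y‖ < r/2)
    {xs : E} {l : F} (hfn : pl2 xs (-l) ∈ frechetNC (svGraph Φ) (pl2 x y)) :
    ‖l‖ ≤ (κ+2) * (‖xs‖+1) := by
  obtain ⟨hmem, hF⟩ := hfn
  have hyΦ : y ∈ Φ x := hmem
  by_cases hl : l = 0
  · rw [hl, norm_zero]; positivity
  have hlpos : 0 < ‖l‖ := norm_pos_iff.mpr hl
  obtain ⟨δ, hδ, hfre⟩ := hF 1 one_pos
  have hκ2 : (0:ℝ) < κ + 2 := by linarith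
  set t := min 1 (min (r/2) (δ/(κ+2))) / 2 with ht_def
  have hrpos : (0:ℝ) < r/2 := by linarith
  have hδκ : (0:ℝ) < δ/(κ+2) := by positivity
  have ht : 0 < t := by
    have h1 : (0:ℝ) < min (r/2) (δ/(κ+2)) := lt_min hrpos hδκ
    have h2 : (0:ℝ) < min 1 (min (r/2) (δ/(κ+2))) := lt_min one_pos h1
    positivity
  have ht1 : t ≤ 1 := by
    have := min_le_left (1:ℝ) (min (r/2) (δ/(κ+2)))
    rw [ht_def]; linarith
  have htr : t < r/2 := by
    have h1 := (min_le_right (1:ℝ) _).trans (min_le_left (r/2) (δ/(κ+2)))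
    rw [ht_def]; linarith
  have htδ : t * (κ+2) < δ := by
    have h1 := (min_le_right (1:ℝ) _).trans (min_le_right (r/2) (δ/(κ+2)))
    have h2 : t ≤ (δ/(κ+2))/2 := by rw [ht_def]; linarith
    have h3 : t*(κ+2) ≤ ((δ/(κ+2))/2)*(κ+2) := by nlinarith
    have h4 : ((δ/(κ+2))/2)*(κ+2) = δ/2 := by field_simp
    linarith
  set u := ‖l‖⁻¹ • l with hu_def
  have hu : ‖u‖ = 1 := by
    rw [hu_def, norm_smul, Real.norm_of_nonneg (by positivity)]
    field_simp
  set y' := y - t • u with hy'_def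
  have hy'sub : y' - y = -(t • u) := by rw [hy'_def]; abel
  have hny' : ‖y' - y‖ = t := by
    rw [hy'sub, norm_neg, norm_smul, hu, mul_one, Real.norm_of_nonneg ht.le]
  have hy' : y' ∈ Metric.ball (0:F) r := by
    rw [Metric.mem_ball, dist_zero_right]
    calc ‖y'‖ ≤ ‖y‖ + ‖t • u‖ := norm_sub_le _ _
      _ = ‖y‖ + t := by rw [norm_smul, hu, mul_one, Real.norm_of_nonneg ht.le]
      _ < r/2 + r/2 := by linarith
      _ = r := by ring
  have hd1 : EMetric.infEdist y' (Φ x) ≤ ENNReal.ofReal t := by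
    refine (EMetric.infEdist_le_edist_of_mem hyΦ).trans ?_
    rw [edist_dist]
    exact ENNReal.ofReal_le_ofReal (by rw [dist_eq_norm, hny'])
  have hd2 : EMetric.infEdist x {x' | y' ∈ Φ x'} < ENNReal.ofReal (κ*t + t*t) := by
    calc EMetric.infEdist x {x' | y' ∈ Φ x'}
        ≤ ENNReal.ofReal κ * EMetric.infEdist y' (Φ x) := hreg x hxU y' hy'
      _ ≤ ENNReal.ofReal κ * ENNReal.ofReal t := by gcongr
      _ = ENNReal.ofReal (κ*t) := by rw [← ENNReal.ofReal_mul hκ.le]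
      _ < ENNReal.ofReal (κ*t + t*t) := by
          rw [ENNReal.ofReal_lt_ofReal_iff (by nlinarith)]; nlinarith
  obtain ⟨x', hx'mem, hx'd⟩ := EMetric.infEdist_lt_iff.mp hd2
  have hdxx : dist x x' < κ*t + t*t := edist_lt_ofReal.mp hx'd
  have hq : pl2 x' y' ∈ svGraph Φ := hx'mem
  have hnx : ‖x' - x‖ < (κ+1)*t := by
    have h1 : ‖x' - x‖ = dist x x' := by rw [dist_eq_norm, norm_sub_rev]
    nlinarith
  have hnorm : ‖pl2 x' y' - pl2 x y‖ < (κ+2)*t := by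
    rw [pl2_sub]
    refine (norm_pl2_le _ _).trans_lt ?_
    rw [hny']; linarith
  have hkey := hfre _ hq (by rw [pl2_sub] at hnorm ⊢; nlinarith)
  rw [pl2_sub, inner_pl2] at hkey
  have hinner2 : ⟪-l, y' - y⟫ = t * ‖l‖ := by
    rw [hy'sub, hu_def, inner_neg_right, real_inner_smul_right, real_inner_smul_right,
      inner_neg_left, real_inner_self_eq_norm_mul_norm]
    field_simp
  have hinner1 : -(‖xs‖ * ‖x' - x‖) ≤ ⟪xs, x' - x⟫ := by
    have h1 := abs_real_inner_le_norm xs (x' - x)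
    rw [abs_le] at h1
    linarith [h1.1]
  have hbnd : ‖pl2 (x' - x) (y' - y)‖ ≤ (κ+2)*t := by
    rw [pl2_sub] at hnorm; linarith
  rw [hinner2, one_mul] at hkey
  have hmain : t * ‖l‖ ≤ ‖xs‖ * ((κ+1)*t) + (κ+2)*t := by
    nlinarith [mul_le_mul_of_nonneg_left hnx.le (norm_nonneg xs)]
  nlinarith [norm_nonneg xs, mul_pos ht hlpos]
end L2

section L3
variable {E F : Type*} [NormedAddCommGroup E] [InnerProductSpace ℝ E]
  [NormedAddCommGroup F] [InnerProductSpace ℝ F]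

lemma limiting_bound {Φ : E → Set F} {r κ : ℝ} {Ub : Set E}
    (hκ : 0 < κ) (hr : 0 < r) (hUo : IsOpen Ub)
    (hreg : ∀ x ∈ Ub, ∀ y ∈ Metric.ball (0:F) r,
      EMetric.infEdist x {x' | y ∈ Φ x'} ≤ ENNReal.ofReal κ * EMetric.infEdist y (Φ x))
    {x : E} {y : F} (hx : x ∈ Ub) (hy : ‖y‖ < r/2)
    {xs : E} {l : F} (h : pl2 xs (-l) ∈ limitingNC (svGraph Φ) (pl2 x y)) :
    ‖l‖ ≤ (κ+2) * (‖xs‖+1) := by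
  obtain ⟨qk, wk, hqA, hqt, hwF, hwt⟩ := h
  have hat : Tendsto (fun k => (qk k).ofLp.1) atTop (𝓝 x) := tendsto_pl2_fst hqt
  have hbt : Tendsto (fun k => (qk k).ofLp.2) atTop (𝓝 y) := tendsto_pl2_snd hqt
  have hxst : Tendsto (fun k => (wk k).ofLp.1) atTop (𝓝 xs) := tendsto_pl2_fst hwt
  have hlt : Tendsto (fun k => -(wk k).ofLp.2) atTop (𝓝 l) := by
    have h2 : Tendsto (fun k => -(wk k).ofLp.2) atTop (𝓝 (-(pl2 xs (-l)).ofLp.2)) :=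
      (tendsto_pl2_snd hwt).neg
    have h3 : (-(pl2 xs (-l)).ofLp.2 : F) = l := neg_neg l
    rwa [h3] at h2
  have hev1 : ∀ᶠ k in atTop, (qk k).ofLp.1 ∈ Ub := hat.eventually_mem (hUo.mem_nhds hx)
  have hev2 : ∀ᶠ k in atTop, ‖(qk k).ofLp.2‖ < r/2 := by
    have hball : Metric.ball (0:F) (r/2) ∈ 𝓝 y := Metric.isOpen_ball.mem_nhds (by
      rw [Metric.mem_ball, dist_zero_right]; exact hy)
    exact (hbt.eventually_mem hball).mono (fun k hk => by
      rw [Metric.mem_ball, dist_zero_right] at hk; exact hk)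
  have hevle : ∀ᶠ k in atTop, ‖-(wk k).ofLp.2‖ ≤ (κ+2) * (‖(wk k).ofLp.1‖+1) := by
    refine (hev1.and hev2).mono (fun k hk => ?_)
    have hfn : pl2 ((wk k).ofLp.1) (-(-(wk k).ofLp.2)) ∈ frechetNC (svGraph Φ) (pl2 ((qk k).ofLp.1) ((qk k).ofLp.2)) := by
      rw [neg_neg]
      exact hwF k
    exact frechet_bound hκ hr hreg hk.1 hk.2 hfn
  exact le_of_tendsto_of_tendsto hlt.norm ((hxst.norm.add_const 1).const_mul (κ+2)) hevle
end L3


theorem metric_regularity_implies_AM_regular (n m : ℕ)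
    (Φ : EuclideanSpace ℝ (Fin n) → Set (EuclideanSpace ℝ (Fin m)))
    (hΦ : IsClosed (svGraph Φ))
    (xb : EuclideanSpace ℝ (Fin n)) (hfeas : 0 ∈ Φ xb)
    (hmr : MetricallyRegularAt Φ xb 0) :
    AMregular Φ xb := by
  obtain ⟨U, hU, V, hV, κ, hκ, hreg⟩ := hmr
  obtain ⟨ρ, hρ, hρU⟩ := Metric.mem_nhds_iff.mp hU
  obtain ⟨r, hr, hrV⟩ := Metric.mem_nhds_iff.mp hV
  have hreg' : ∀ x ∈ Metric.ball xb ρ, ∀ y ∈ Metric.ball (0:EuclideanSpace ℝ (Fin m)) r,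
      EMetric.infEdist x {x' | y ∈ Φ x'} ≤ ENNReal.ofReal κ * EMetric.infEdist y (Φ x) :=
    fun x hx y hy => hreg x (hρU hx) y (hrV hy)
  intro xs hxs
  obtain ⟨xk, xsk, yk, hxk, hyk, hxsk, hmem⟩ := hxs
  have hch : ∀ k, ∃ l, xsk k ∈ coderiv Φ (xk k) (yk k) l := fun k => Set.mem_iUnion.mp (hmem k)
  choose l hl using hch
  have hev : ∀ᶠ k in atTop, xk k ∈ Metric.ball xb ρ ∧ ‖yk k‖ < r/2 ∧ ‖xsk k‖ ≤ ‖xs‖ + 1 := by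
    have e1 := hxk.eventually_mem (Metric.ball_mem_nhds xb hρ)
    have e2 := hyk.eventually_mem (Metric.ball_mem_nhds (0:EuclideanSpace ℝ (Fin m)) (half_pos hr))
    have e3 : ∀ᶠ k in atTop, ‖xsk k‖ < ‖xs‖ + 1 :=
      hxsk.norm.eventually_lt_const (lt_add_one _)
    filter_upwards [e1, e2, e3] with k h1 h2 h3
    exact ⟨h1, by simpa [Metric.mem_ball, dist_zero_right] using h2, h3.le⟩
  obtain ⟨N, hN⟩ := eventually_atTop.mp hev
  have hbd : ∀ k, l (k + N) ∈ Metric.closedBall (0:EuclideanSpace ℝ (Fin m)) ((κ+2) * (‖xs‖ + 2)) := by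
    intro k
    obtain ⟨h1, h2, h3⟩ := hN (k+N) (Nat.le_add_left N k)
    have hb := limiting_bound hκ hr Metric.isOpen_ball hreg' h1 h2 (hl (k+N))
    rw [Metric.mem_closedBall, dist_zero_right]
    have hκ2 : (0:ℝ) < κ + 2 := by linarith
    nlinarith [norm_nonneg (xsk (k+N))]
  obtain ⟨lb, _, φ, hφ, hlb⟩ := (isCompact_closedBall
    (0:EuclideanSpace ℝ (Fin m)) ((κ+2) * (‖xs‖ + 2))).tendsto_subseq hbd
  refine Set.mem_iUnion.mpr ⟨lb, ?_⟩
  show pl2 xs (-lb) ∈ limitingNC (svGraph Φ) (pl2 xb 0)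
  have hT : Tendsto (fun k : ℕ => k + N) atTop atTop := tendsto_add_atTop_nat N
  refine limitingNC_closed (A := svGraph Φ)
    (p := fun k => pl2 (xk (φ k + N)) (yk (φ k + N)))
    (v := fun k => pl2 (xsk (φ k + N)) (-(l (φ k + N)))) ?_ ?_ (fun k => hl (φ k + N))
  · exact tendsto_pl2 ((hxk.comp hT).comp hφ.tendsto_atTop) ((hyk.comp hT).comp hφ.tendsto_atTop)
  · exact tendsto_pl2 ((hxsk.comp hT).comp hφ.tendsto_atTop) hlb.neg
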